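/- In the edge-weighted graph G on vertices {1,...,8} defined by the weight table with w(i,i+1) = 2 for i = 1,...,7, twelve specified edges of weight 1, and all remaining edges of weight 0, the path 1-2-3-4-5-6-7-8 is the unique maximum-weight spanning tree, having weight 14. -/

import Mathlib

open Set

/-- A plane drawing (embedding) of a simple graph: vertices are distinct points of the
plane, each edge is a simple arc between its endpoints, arcs meet only at common endpoints,
and arc interiors avoid all vertex points. -/
structure PlaneDrawing {V : Type*} (G : SimpleGraph V) where
  vpos : V → ℝ × ℝ
  vinj : Function.Injective vpos
  arc : V → V → ℝ → ℝ × ℝ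
  arc_symm : ∀ u v t, arc u v t = arc v u (1 - t)
  arc_cont : ∀ ⦃u v⦄, G.Adj u v → ContinuousOn (arc u v) (Icc 0 1)
  arc_src : ∀ ⦃u v⦄, G.Adj u v → arc u v 0 = vpos u
  arc_tgt : ∀ ⦃u v⦄, G.Adj u v → arc u v 1 = vpos v
  arc_inj : ∀ ⦃u v⦄, G.Adj u v → InjOn (arc u v) (Icc 0 1)
  arc_avoid : ∀ ⦃u v⦄, G.Adj u v → ∀ t ∈ Ioo (0:ℝ) 1, ∀ w, arc u v t ≠ vpos w
  arc_disjoint : ∀ ⦃u v x y⦄, G.Adj u v → G.Adj x y → s(u, v) ≠ s(x, y) →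
    ∀ ⦃s t : ℝ⦄, s ∈ Ioo (0:ℝ) 1 → t ∈ Ioo (0:ℝ) 1 → arc u v s ≠ arc x y t

namespace PlaneDrawing

variable {V : Type*} {G : SimpleGraph V}

/-- The set of points of the plane covered by the drawing. -/
def support (D : PlaneDrawing G) : Set (ℝ × ℝ) :=
  (Set.range D.vpos) ∪ ⋃ (u : V) (v : V) (_ : G.Adj u v), D.arc u v '' Icc 0 1

/-- A face of the drawing: a connected component of the complement of the drawing. -/
def IsFace (D : PlaneDrawing G) (Fc : Set (ℝ × ℝ)) : Prop :=
  ∃ x ∉ D.support, Fc = connectedComponentIn (D.support)ᶜ x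

/-- The edge `{u,v}` lies on (the boundary of) the face `Fc`. -/
def EdgeOn (D : PlaneDrawing G) (u v : V) (Fc : Set (ℝ × ℝ)) : Prop :=
  G.Adj u v ∧ D.arc u v '' Icc 0 1 ⊆ closure Fc

/-- The face `Fc` is bounded by the 3-cycle (triangle) on the vertices `a, b, c`. -/
def FaceTriangle (D : PlaneDrawing G) (Fc : Set (ℝ × ℝ)) (a b c : V) : Prop :=
  D.IsFace Fc ∧ G.Adj a b ∧ G.Adj b c ∧ G.Adj a c ∧
    frontier Fc = D.arc a b '' Icc 0 1 ∪ D.arc b c '' Icc 0 1 ∪ D.arc a c '' Icc 0 1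

/-- The drawing has a triangular face with vertices `a, b, c`. -/
def HasFace (D : PlaneDrawing G) (a b c : V) : Prop :=
  ∃ Fc, D.FaceTriangle Fc a b c

end PlaneDrawing

/-- A graph is planar if it admits a plane drawing. -/
def SimpleGraph.IsPlanar {V : Type*} (G : SimpleGraph V) : Prop :=
  Nonempty (PlaneDrawing G)

/-- A graph is maximal planar if it is planar and no edge between distinct
non-adjacent vertices can be added while preserving planarity. -/
def SimpleGraph.IsMaximalPlanar {V : Type*} (G : SimpleGraph V) : Prop :=
  G.IsPlanar ∧ ∀ u v : V, u ≠ v → ¬ G.Adj u v →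
    ¬ SimpleGraph.IsPlanar (G ⊔ SimpleGraph.fromEdgeSet {s(u, v)})

open scoped Classical

/-- The edge weights of the counterexample graph: vertex `i : Fin 8` stands for
vertex `i+1` of the paper.  Consecutive vertices get weight 2, twelve specified
pairs get weight 1, all other pairs weight 0. -/
noncomputable def cw (i j : Fin 8) : ℝ :=
  if i.val + 1 = j.val ∨ j.val + 1 = i.val then 2
  else if (min i.val j.val, max i.val j.val) ∈
      [(0,2),(0,3),(0,4),(0,7),(1,4),(1,5),(1,7),(2,5),(2,7),(3,5),(3,6),(4,6)] then 1
  else 0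

/-- The total weight of a graph on `Fin 8`: the sum of the weights of its edges. -/
noncomputable def cweight (H : SimpleGraph (Fin 8)) : ℝ :=
  (∑ i : Fin 8, ∑ j : Fin 8, if H.Adj i j then cw i j else 0) / 2

/-! A spanning tree on 8 vertices has 7 edges. Every edge weighs at most 2, and the edges of
weight exactly 2 are the edges of the path, so every spanning tree weighs at most 14 = 7 · 2, and
a tree reaching 14 has all its edges on the path; a tree contained in a tree equals it. -/

open Finset

namespace SimpleGraph

variable {V : Type*}

theorem sum_ite_adj_eq_sum_dart [Fintype V] (G : SimpleGraph V) [DecidableRel G.Adj]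
    {M : Type*} [AddCommMonoid M] (f : V → V → M) :
    ∑ i, ∑ j, (if G.Adj i j then f i j else 0) = ∑ d : G.Dart, f d.fst d.snd := by
  rw [← sum_product', ← sum_filter]
  exact (sum_bij (fun d _ => d.toProd) (by simp [Dart.adj]) (fun _ _ _ _ => Dart.ext _ _)
    (fun p hp => ⟨⟨p, (mem_filter.mp hp).2⟩, mem_univ _, rfl⟩) (fun _ _ => rfl)).symm

theorem sum_dart_edge_eq_two_nsmul [Fintype V] [DecidableEq V] (G : SimpleGraph V)
    [DecidableRel G.Adj] {M : Type*} [AddCommMonoid M] (f : Sym2 V → M) :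
    ∑ d : G.Dart, f d.edge = 2 • ∑ e ∈ G.edgeFinset, f e := by
  rw [← sum_fiberwise_of_maps_to (g := Dart.edge) (t := G.edgeFinset)
    (fun d _ => by simp [Dart.edge_mem]), smul_sum]
  refine sum_congr rfl fun e he => ?_
  rw [sum_congr rfl fun d hd => congrArg f (mem_filter.mp hd).2, sum_const,
    G.dart_edge_fiber_card e (mem_edgeFinset.mp he)]

theorem card_edgeSet_pathGraph (n : ℕ) : Nat.card (pathGraph (n + 1)).edgeSet = n := by
  let f : Fin n → (pathGraph (n + 1)).edgeSet := fun i =>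
    ⟨s(i.castSucc, i.succ), pathGraph_adj.mpr (Or.inl rfl)⟩
  refine (Nat.card_eq_of_bijective f ⟨fun i j h => ?_, fun ⟨e, he⟩ => ?_⟩).symm.trans
    (Nat.card_eq_fintype_card.trans (Fintype.card_fin n))
  · have h' := congrArg Subtype.val h
    simp only [f, Sym2.eq_iff, Fin.ext_iff, Fin.val_castSucc, Fin.val_succ] at h'
    omega
  · induction e using Sym2.ind with
    | _ u v =>
      rcases pathGraph_adj.mp he with h | h <;> dsimp only at h
      · exact ⟨⟨u, by omega⟩, Subtype.ext <| Sym2.eq_iff.mpr <| Or.inl ⟨Fin.ext rfl, Fin.ext h⟩⟩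
      · exact ⟨⟨v, by omega⟩, Subtype.ext <| Sym2.eq_iff.mpr <| Or.inr ⟨Fin.ext rfl, Fin.ext h⟩⟩

theorem pathGraph_isTree (n : ℕ) : (pathGraph (n + 1)).IsTree := by
  rw [isTree_iff_connected_and_card, card_edgeSet_pathGraph, Nat.card_eq_fintype_card,
    Fintype.card_fin]
  exact ⟨pathGraph_connected n, rfl⟩

theorem IsTree.eq_of_le {T T' : SimpleGraph V} (hT : T.IsTree) (hT' : T'.IsTree) (h : T ≤ T') :
    T = T' :=
  (isTree_iff_minimal_connected.mp hT').eq_of_le hT.connected h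

theorem IsTree.sum_edgeFinset_lt_of_forall_lt [Finite V] {M : Type*} [AddCommMonoid M]
    [PartialOrder M] [IsOrderedCancelAddMonoid M] {T P : SimpleGraph V} [Fintype T.edgeSet]
    [Fintype P.edgeSet] (hT : T.IsTree) (hP : P.IsTree) (hne : T ≠ P) {f : Sym2 V → M} {c : M}
    (hfP : ∀ e ∈ P.edgeSet, f e = c) (hf : ∀ e ∉ P.edgeSet, f e < c) :
    ∑ e ∈ T.edgeFinset, f e < ∑ e ∈ P.edgeFinset, f e := by
  have := Fintype.ofFinite V
  have hle : ∀ e, f e ≤ c := fun e =>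
    if he : e ∈ P.edgeSet then (hfP e he).le else (hf e he).le
  obtain ⟨e, heT, heP⟩ : ∃ e ∈ T.edgeSet, e ∉ P.edgeSet :=
    Set.not_subset.mp fun h => hne (hT.eq_of_le hP (edgeSet_subset_edgeSet.mp h))
  have hcard : #T.edgeFinset = #P.edgeFinset := by
    have := hT.card_edgeFinset
    have := hP.card_edgeFinset
    omega
  calc ∑ e ∈ T.edgeFinset, f e
      < ∑ _e ∈ T.edgeFinset, c := sum_lt_sum (fun e _ => hle e) ⟨e, by simpa using heT, hf e heP⟩
    _ = ∑ e ∈ P.edgeFinset, f e := by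
      rw [sum_const, hcard, ← sum_const]
      exact sum_congr rfl fun e he => (hfP e (mem_edgeFinset.mp he)).symm

end SimpleGraph

open SimpleGraph

theorem cw_symm (i j : Fin 8) : cw i j = cw j i := by
  unfold cw
  exact if_congr or_comm rfl (if_congr (by rw [min_comm, max_comm]) rfl rfl)

noncomputable def cwEdge : Sym2 (Fin 8) → ℝ := Sym2.lift ⟨cw, cw_symm⟩

theorem cweight_eq_sum_cwEdge (H : SimpleGraph (Fin 8)) :
    cweight H = ∑ e ∈ H.edgeFinset, cwEdge e := by
  rw [cweight, sum_ite_adj_eq_sum_dart]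
  change (∑ d : H.Dart, cwEdge d.edge) / 2 = _
  rw [sum_dart_edge_eq_two_nsmul, two_nsmul]
  ring

theorem cwEdge_eq_two_of_mem {e : Sym2 (Fin 8)} (he : e ∈ (pathGraph 8).edgeSet) :
    cwEdge e = 2 := by
  induction e using Sym2.ind with
  | _ i j =>
    rw [mem_edgeSet, pathGraph_adj] at he
    simp [cwEdge, cw, he]

theorem cwEdge_lt_two_of_notMem {e : Sym2 (Fin 8)} (he : e ∉ (pathGraph 8).edgeSet) :
    cwEdge e < 2 := by
  induction e using Sym2.ind with
  | _ i j =>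
    rw [mem_edgeSet, pathGraph_adj] at he
    simp only [cwEdge, Sym2.lift_mk, cw, if_neg he]
    split_ifs <;> norm_num

/-- In the counterexample graph, the path `1-2-⋯-8` is the unique
maximum-weight spanning tree, of weight 14. -/
theorem path_is_unique_mst :
    (SimpleGraph.pathGraph 8).IsTree ∧
    cweight (SimpleGraph.pathGraph 8) = 14 ∧
    ∀ T : SimpleGraph (Fin 8), T.IsTree → T ≠ SimpleGraph.pathGraph 8 →
      cweight T < cweight (SimpleGraph.pathGraph 8) := by
  have hP : (pathGraph 8).IsTree := pathGraph_isTree 7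
  have hweight : cweight (pathGraph 8) = 14 := by
    have hcard := hP.card_edgeFinset
    rw [Fintype.card_fin] at hcard
    rw [cweight_eq_sum_cwEdge,
      sum_congr rfl fun e he => cwEdge_eq_two_of_mem (mem_edgeFinset.mp he), sum_const,
      show #(pathGraph 8).edgeFinset = 7 by omega]
    norm_num
  refine ⟨hP, hweight, fun T hT hne => ?_⟩
  rw [cweight_eq_sum_cwEdge, cweight_eq_sum_cwEdge]
  exact hT.sum_edgeFinset_lt_of_forall_lt hP hne (fun _ => cwEdge_eq_two_of_mem)
    (fun _ => cwEdge_lt_two_of_notMem)
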